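/- Let b > 0 be real. Assume θ(x) < x for all 0 < x ≤ e^b, assume there exists ε > 0 with |ψ(x) − x| ≤ ε·x for all x ≥ e^b, and assume ψ(x) ≤ 1.03883·x for all x > 0. Then θ(x) ≤ (1 + ε)·x for all x > 0, and ( 1 − ε − 1.03883·(e^{−b/2} + e^{−2b/3} + e^{−4b/5}) )·x ≤ θ(x) for all x ≥ e^b. -/

import Mathlib

/-- Chebyshev theta function: `θ(x) = ∑_{p ≤ x, p prime} log p`. -/
noncomputable def chebTheta (x : ℝ) : ℝ :=
  ∑ p ∈ (Finset.range (⌊x⌋₊ + 1)).filter Nat.Prime, Real.log p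

/-- Chebyshev psi function: `ψ(x) = ∑_{n ≤ x} Λ(n)`. -/
noncomputable def chebPsi (x : ℝ) : ℝ :=
  ∑ n ∈ Finset.range (⌊x⌋₊ + 1), ArithmeticFunction.vonMangoldt n

/-!
The upper bound is `θ ≤ ψ` together with the hypothesis below `e^b`. For the lower bound,
the Costa Pereira inequality `ψ x - θ x ≤ ψ (x^(1/2)) + ψ (x^(1/3)) + ψ (x^(1/5))` reduces it
to the crude bound `ψ y ≤ 1.03883 y` at `y = x^(1/k)`, and `x^(1/k) ≤ e^(-(1 - 1/k) b) x`
once `x ≥ e^b`.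
-/

open Real Chebyshev

lemma chebPsi_eq_psi (x : ℝ) : chebPsi x = ψ x := by
  rw [psi_eq_sum_Icc, chebPsi, Nat.range_succ_eq_Icc_zero]

lemma chebTheta_eq_theta (x : ℝ) : chebTheta x = θ x := by
  rw [theta_eq_sum_Icc, chebTheta, Nat.range_succ_eq_Icc_zero]

lemma rpow_le_exp_mul_self {b x r : ℝ} (hr : r ≤ 1) (hx : exp b ≤ x) :
    x ^ r ≤ exp ((r - 1) * b) * x := by
  have hx0 : 0 < x := (exp_pos b).trans_le hx
  calc x ^ r = x ^ (r - 1) * x := by rw [rpow_sub_one hx0.ne', div_mul_cancel₀ _ hx0.ne']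
    _ ≤ exp b ^ (r - 1) * x :=
      mul_le_mul_of_nonneg_right (rpow_le_rpow_of_nonpos (exp_pos b) hx (by linarith)) hx0.le
    _ = exp ((r - 1) * b) * x := by rw [← exp_mul, mul_comm b]

theorem statement14_general (b : ℝ)
    (hθ : ∀ x : ℝ, 0 < x → x ≤ Real.exp b → chebTheta x < x)
    (ε : ℝ) (hε : ε > 0)
    (hψ : ∀ x : ℝ, x ≥ Real.exp b → |chebPsi x - x| ≤ ε * x)
    (hψ0 : ∀ x : ℝ, x > 0 → chebPsi x ≤ 1.03883 * x) :
    (∀ x : ℝ, x > 0 → chebTheta x ≤ (1 + ε) * x) ∧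
    (∀ x : ℝ, x ≥ Real.exp b →
      (1 - ε - 1.03883 * (Real.exp (-b / 2) + Real.exp (-2 * b / 3)
        + Real.exp (-4 * b / 5))) * x ≤ chebTheta x) := by
  simp only [chebTheta_eq_theta, chebPsi_eq_psi] at hθ hψ hψ0 ⊢
  refine ⟨fun x hx => ?_, fun x hx => ?_⟩
  · rcases le_or_gt x (exp b) with hxb | hxb
    · linarith [hθ x hx hxb, mul_pos hε hx]
    · linarith [theta_le_psi x, (abs_le.mp (hψ x hxb.le)).2]
  · have hx0 : 0 < x := (exp_pos b).trans_le hx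
    have hroot (r : ℝ) (hr : r ≤ 1) : ψ (x ^ r) ≤ 1.03883 * (exp ((r - 1) * b) * x) :=
      (hψ0 _ (by positivity)).trans (by gcongr; exact rpow_le_exp_mul_self hr hx)
    have h2 := hroot 2⁻¹ (by norm_num)
    have h3 := hroot 3⁻¹ (by norm_num)
    have h5 := hroot 5⁻¹ (by norm_num)
    rw [show ((2 : ℝ)⁻¹ - 1) * b = -b / 2 by ring] at h2
    rw [show ((3 : ℝ)⁻¹ - 1) * b = -2 * b / 3 by ring] at h3
    rw [show ((5 : ℝ)⁻¹ - 1) * b = -4 * b / 5 by ring] at h5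
    linarith [psi_sub_theta_le_psi_add_psi_add_psi x, (abs_le.mp (hψ x hx)).1]

theorem statement14 (b : ℝ) (hb : b > 0)
    (hθ : ∀ x : ℝ, 0 < x → x ≤ Real.exp b → chebTheta x < x)
    (ε : ℝ) (hε : ε > 0)
    (hψ : ∀ x : ℝ, x ≥ Real.exp b → |chebPsi x - x| ≤ ε * x)
    (hψ0 : ∀ x : ℝ, x > 0 → chebPsi x ≤ 1.03883 * x) :
    (∀ x : ℝ, x > 0 → chebTheta x ≤ (1 + ε) * x) ∧
    (∀ x : ℝ, x ≥ Real.exp b →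
      (1 - ε - 1.03883 * (Real.exp (-b / 2) + Real.exp (-2 * b / 3)
        + Real.exp (-4 * b / 5))) * x ≤ chebTheta x) :=
  statement14_general b hθ ε hε hψ hψ0
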